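/- arXiv:0807.2611 — 5 statements merged into one kernel-verified Lean document; each statement's English description precedes it below -/
import Mathlib

section
/- Let ρ be a probability measure on the positive integers satisfying ρ(n) ≤ C·n^{-α} for all n ≥ 1, with C < ∞ and α ∈ (1,∞). Then for every m, n ≥ 1, the m-fold convolution satisfies ρ^{*m}(n) ≤ (max(C,1))·m^{α+1}·n^{-α}. -/
/-!
Every composition `x` of `n` into `m` positive parts has a part `x i ≥ n / m`, and there
`ρ (x i) ≤ C m^α n^{-α}`. The parts off `i` determine `x i`, so summing `∏ j, ρ (x j)` over the
compositions whose part `i` is large costs at most this factor times `(∑ ρ)^{m-1} ≤ 1`.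
A union bound over the `m` choices of `i` contributes the remaining factor `m`.
-/

open scoped Classical

noncomputable section

/-- The `m`-fold convolution of `ρ` on the positive integers:
`ρ^{*m}(n) = ∑_{x_1+⋯+x_m = n, x_i ≥ 1} ∏_i ρ(x_i)`. -/
def convPow (ρ : ℕ → ℝ) (m n : ℕ) : ℝ :=
  ∑' x : Fin m → ℕ,
    if (∀ i, 1 ≤ x i) ∧ (∑ i, x i) = n then ∏ i, ρ (x i) else 0

open Finset

variable {ι : Type*} [Fintype ι]

def compositions (m n : ℕ) : Finset (Fin m → ℕ) :=
  (Fintype.piFinset fun _ => range (n + 1)).filter fun x => (∀ i, 1 ≤ x i) ∧ ∑ i, x i = n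

theorem convPow_eq_sum_compositions (ρ : ℕ → ℝ) (m n : ℕ) :
    convPow ρ m n = ∑ x ∈ compositions m n, ∏ i, ρ (x i) := by
  rw [compositions, sum_filter]
  refine tsum_eq_sum fun x hx => if_neg fun ⟨_, hsum⟩ => hx ?_
  refine Fintype.mem_piFinset.2 fun i => mem_range.2 (Nat.lt_succ_of_le ?_)
  exact hsum ▸ single_le_sum (fun j _ => Nat.zero_le (x j)) (mem_univ i)

theorem sum_le_sum_sum_filter_of_forall_exists {β M : Type*} [AddCommMonoid M] [PartialOrder M]
    [IsOrderedAddMonoid M] {s : Finset β} {f : β → M}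
    (hf : ∀ x ∈ s, 0 ≤ f x) {p : ι → β → Prop} [∀ i, DecidablePred (p i)]
    (hp : ∀ x ∈ s, ∃ i, p i x) :
    ∑ x ∈ s, f x ≤ ∑ i, ∑ x ∈ s.filter (p i), f x := by
  simp_rw [sum_filter]
  rw [sum_comm]
  refine sum_le_sum fun x hx => ?_
  obtain ⟨i, hi⟩ := hp x hx
  calc f x = if p i x then f x else 0 := (if_pos hi).symm
    _ ≤ ∑ j, if p j x then f x else 0 :=
      single_le_sum (f := fun j => if p j x then f x else 0)
        (fun j _ => by split_ifs <;> simp only [hf x hx, le_refl]) (mem_univ i)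

theorem exists_le_card_mul_of_sum_eq {x : ι → ℕ} {n : ℕ} (hx : ∑ i, x i = n) (hn : 0 < n) :
    ∃ i, n ≤ Fintype.card ι * x i := by
  have hne : (univ : Finset ι).Nonempty := nonempty_of_sum_ne_zero (hx ▸ hn.ne')
  obtain ⟨i, -, hi⟩ := exists_le_of_sum_le hne (f := fun _ => n) (g := fun i => Fintype.card ι * x i)
    (by rw [sum_const, card_univ, smul_eq_mul, ← mul_sum, hx])
  exact ⟨i, hi⟩

theorem injOn_restrict_ne_of_sum_eq {M : Type*} [AddCancelCommMonoid M] (i : ι) (n : M) :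
    Set.InjOn (fun x (j : {j // j ≠ i}) => x j) {x : ι → M | ∑ j, x j = n} := by
  intro x hx y hy hxy
  have hrest : ∀ j : {j // j ≠ i}, x j = y j := congrFun hxy
  have hi : x i = y i := by
    have hsum : ∑ j, x j = ∑ j, y j := hx.trans hy.symm
    rw [Fintype.sum_eq_add_sum_subtype_ne _ i, Fintype.sum_eq_add_sum_subtype_ne y i] at hsum
    simp only [hrest] at hsum
    exact add_right_cancel hsum
  funext j
  by_cases hj : j = i
  · exact hj ▸ hi
  · exact hrest ⟨j, hj⟩

section ProductWeights

variable {β : Type*} {ρ : β → ℝ} (hρ : ∀ b, 0 ≤ ρ b) (hρ1 : ∀ t : Finset β, ∑ b ∈ t, ρ b ≤ 1)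
include hρ hρ1

theorem sum_prod_le_one (s : Finset (ι → β)) : ∑ x ∈ s, ∏ j, ρ (x j) ≤ 1 :=
  calc ∑ x ∈ s, ∏ j, ρ (x j)
      ≤ ∑ x ∈ Fintype.piFinset fun j => s.image (· j), ∏ j, ρ (x j) :=
        sum_le_sum_of_subset_of_nonneg
          (fun _ hx => Fintype.mem_piFinset.2 fun _ => mem_image_of_mem _ hx)
          (fun _ _ _ => prod_nonneg fun _ _ => hρ _)
    _ = ∏ j, ∑ b ∈ s.image (· j), ρ b := (prod_univ_sum _ _).symm
    _ ≤ 1 := prod_le_one (fun _ _ => sum_nonneg fun b _ => hρ b) fun _ _ => hρ1 _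

theorem sum_prod_le_of_injOn_restrict_ne {s : Finset (ι → β)} {i : ι}
    (hs : Set.InjOn (fun (x : ι → β) (j : {j // j ≠ i}) => x j) s) {K : ℝ} (hK0 : 0 ≤ K)
    (hK : ∀ x ∈ s, ρ (x i) ≤ K) :
    ∑ x ∈ s, ∏ j, ρ (x j) ≤ K :=
  calc ∑ x ∈ s, ∏ j, ρ (x j) = ∑ x ∈ s, ρ (x i) * ∏ j : {j // j ≠ i}, ρ (x j) := by
        simp_rw [Fintype.prod_eq_mul_prod_subtype_ne _ i]
    _ ≤ ∑ x ∈ s, K * ∏ j : {j // j ≠ i}, ρ (x j) :=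
        sum_le_sum fun x hx => mul_le_mul_of_nonneg_right (hK x hx) (prod_nonneg fun j _ => hρ _)
    _ = K * ∑ y ∈ s.image fun x (j : {j // j ≠ i}) => x j, ∏ j, ρ (y j) := by
        rw [mul_sum, sum_image hs]
    _ ≤ K * 1 := mul_le_mul_of_nonneg_left (sum_prod_le_one hρ hρ1 _) hK0
    _ = K := mul_one K

end ProductWeights

theorem rpow_neg_le_mul_rpow_neg_of_le_mul {m n k a : ℝ} (hm : 0 ≤ m) (hn : 0 < n)
    (hnk : n ≤ m * k) (ha : 0 ≤ a) :
    k ^ (-a) ≤ m ^ a * n ^ (-a) := by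
  have hm' : 0 < m := lt_of_le_of_ne hm (by rintro rfl; linarith)
  calc k ^ (-a) ≤ (n / m) ^ (-a) :=
        Real.rpow_le_rpow_of_nonpos (by positivity) (by rwa [div_le_iff₀' hm']) (by linarith)
    _ = m ^ a * n ^ (-a) := by
        rw [Real.div_rpow hn.le hm, Real.rpow_neg hm, div_inv_eq_mul, mul_comm]

theorem le_of_tail_of_le_mul {ρ : ℕ → ℝ} {C α : ℝ} (hα : 0 ≤ α)
    (htail : ∀ n : ℕ, 1 ≤ n → ρ n ≤ C * (n : ℝ) ^ (-α)) {m n k : ℕ} (hn : 1 ≤ n)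
    (hnk : n ≤ m * k) :
    ρ k ≤ max C 1 * ((m : ℝ) ^ α * (n : ℝ) ^ (-α)) := by
  have hk : 1 ≤ k := Nat.pos_of_ne_zero (by rintro rfl; omega)
  calc ρ k ≤ C * (k : ℝ) ^ (-α) := htail k hk
    _ ≤ max C 1 * (k : ℝ) ^ (-α) := mul_le_mul_of_nonneg_right (le_max_left C 1) (by positivity)
    _ ≤ max C 1 * ((m : ℝ) ^ α * (n : ℝ) ^ (-α)) :=
        mul_le_mul_of_nonneg_left (rpow_neg_le_mul_rpow_neg_of_le_mul (by positivity)
          (by exact_mod_cast hn) (by exact_mod_cast hnk) hα) (by positivity)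

theorem convPow_tail_bound_general
    (ρ : ℕ → ℝ) (hρnonneg : ∀ n, 0 ≤ ρ n)
    (hρsum : ∑' n : ℕ, ρ n = 1)
    (C α : ℝ) (hα : 1 < α)
    (htail : ∀ n : ℕ, 1 ≤ n → ρ n ≤ C * (n : ℝ) ^ (-α))
    (m n : ℕ) (hn : 1 ≤ n) :
    convPow ρ m n ≤ (max C 1) * (m : ℝ) ^ (α + 1) * (n : ℝ) ^ (-α) := by
  have hρ : Summable ρ := by
    by_contra h
    simp [tsum_eq_zero_of_not_summable h] at hρsum
  have hρ1 : ∀ t : Finset ℕ, ∑ k ∈ t, ρ k ≤ 1 := fun t =>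
    hρsum ▸ hρ.sum_le_tsum t fun k _ => hρnonneg k
  set K := max C 1 * ((m : ℝ) ^ α * (n : ℝ) ^ (-α))
  have hlarge : ∀ i : Fin m,
      ∑ x ∈ (compositions m n).filter (fun x => n ≤ m * x i), ∏ j, ρ (x j) ≤ K := fun i =>
    sum_prod_le_of_injOn_restrict_ne hρnonneg hρ1
      ((injOn_restrict_ne_of_sum_eq i n).mono fun x hx => (mem_filter.1 (mem_filter.1 hx).1).2.2)
      (by positivity) fun x hx => le_of_tail_of_le_mul (by linarith) htail hn (mem_filter.1 hx).2
  calc convPow ρ m n = ∑ x ∈ compositions m n, ∏ j, ρ (x j) := convPow_eq_sum_compositions ρ m n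
    _ ≤ ∑ i : Fin m, ∑ x ∈ (compositions m n).filter (fun x => n ≤ m * x i), ∏ j, ρ (x j) :=
        sum_le_sum_sum_filter_of_forall_exists (fun x _ => prod_nonneg fun j _ => hρnonneg _)
          fun x hx => by
            simpa using exists_le_card_mul_of_sum_eq (mem_filter.1 hx).2.2 hn
    _ ≤ ∑ _i : Fin m, K := sum_le_sum fun i _ => hlarge i
    _ = max C 1 * (m : ℝ) ^ (α + 1) * (n : ℝ) ^ (-α) := by
        rw [sum_const, card_univ, Fintype.card_fin, nsmul_eq_mul,
          Real.rpow_add' (Nat.cast_nonneg m) (by linarith), Real.rpow_one]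
        ring

/-- **Convolution preserves a polynomial tail**: if `ρ(n) ≤ C n^{-α}` for all `n ≥ 1`,
then `ρ^{*m}(n) ≤ (C ∨ 1) m^{α+1} n^{-α}` for all `m, n ≥ 1`. -/
theorem convPow_tail_bound
    (ρ : ℕ → ℝ) (hρ0 : ρ 0 = 0) (hρnonneg : ∀ n, 0 ≤ ρ n)
    (hρsum : ∑' n : ℕ, ρ n = 1)
    (C α : ℝ) (hα : 1 < α)
    (htail : ∀ n : ℕ, 1 ≤ n → ρ n ≤ C * (n : ℝ) ^ (-α))
    (m n : ℕ) (hm : 1 ≤ m) (hn : 1 ≤ n) :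
    convPow ρ m n ≤ (max C 1) * (m : ℝ) ^ (α + 1) * (n : ℝ) ^ (-α) :=
  convPow_tail_bound_general ρ hρnonneg hρsum C α hα htail m n hn

end
end

section
/- Let (ω_l)_{l∈ℕ} be i.i.d. Bernoulli(p) random variables with p ∈ (0,1), α ∈ (1,∞), and for N ∈ ℕ define S_N(ω) = ∑_{0<j_1<...<j_N, ω_{j_1}=...=ω_{j_N}=1} ∏_{i=1}^N (j_i - j_{i-1})^{-α} (with j_0=0). Then for any β ∈ (1/α, 1], the fractional moment satisfies E[S_N(ω)^β] ≤ (p·ζ(αβ))^N, where ζ is the Riemann zeta function. -/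
/-!
Since `x ↦ x ^ β` is subadditive for `β ≤ 1`, pointwise `S_N(α)^β ≤ S_N(αβ)`, and the expectation of
`S_N(q)` can be computed exactly. By independence, a chain `j_1 < ⋯ < j_N` is hit with probability
`p^N`; and the gaps `j_i - j_{i-1} ≥ 1` range freely over the positive integers, so the sum over
chains of `∏_i (j_i - j_{i-1})^{-q}` factorises as `ζ(q)^N`.
-/

open MeasureTheory ProbabilityTheory Filter
open scoped ENNReal Classical

noncomputable section

/-- `j_{i-1}`, with the convention `j_0 = 0`. -/
def prevJ {N : ℕ} (j : Fin N → ℕ) (i : Fin N) : ℕ :=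
  if h : (i : ℕ) = 0 then 0
  else j ⟨(i : ℕ) - 1, lt_of_le_of_lt (Nat.sub_le _ _) i.2⟩

/-- The renewal sum `S_N(ω) = ∑_{0<j_1<⋯<j_N, ω_{j_i}=1 ∀i} ∏_i (j_i-j_{i-1})^{-α}`. -/
def SN (α : ℝ) (N : ℕ) (ω : ℕ → Bool) : ℝ≥0∞ :=
  ∑' j : Fin N → ℕ,
    if (∀ i, prevJ j i < j i) ∧ (∀ i, ω (j i) = true)
    then ∏ i, ((j i - prevJ j i : ℕ) : ℝ≥0∞) ^ (-α) else 0

/-- `ζ(s) = ∑_{n ≥ 1} n^{-s}`, valued in `ℝ≥0∞`. -/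
def zetaE (s : ℝ) : ℝ≥0∞ := ∑' n : ℕ, ((n + 1 : ℕ) : ℝ≥0∞) ^ (-s)

theorem ENNReal.rpow_tsum_le_tsum_rpow {ι : Type*} (f : ι → ℝ≥0∞) {β : ℝ} (hβ0 : 0 < β)
    (hβ1 : β ≤ 1) : (∑' i, f i) ^ β ≤ ∑' i, f i ^ β := by
  rw [← ENNReal.le_rpow_inv_iff hβ0, ENNReal.tsum_eq_iSup_sum]
  refine iSup_le fun s => (ENNReal.le_rpow_inv_iff hβ0).2 ?_
  exact (Finset.le_sum_of_subadditive (· ^ β) (ENNReal.zero_rpow_of_pos hβ0).le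
    (fun x y => ENNReal.rpow_add_le_add_rpow x y hβ0.le hβ1) s f).trans
    (ENNReal.sum_le_tsum s)

theorem ENNReal.tsum_pi_fin_prod (g : ℕ → ℝ≥0∞) (N : ℕ) :
    ∑' k : Fin N → ℕ, ∏ i, g (k i) = (∑' n, g n) ^ N := by
  induction N with
  | zero => simp [tsum_fintype]
  | succ N ih =>
    calc ∑' k : Fin (N + 1) → ℕ, ∏ i, g (k i)
        = ∑' p : ℕ × (Fin N → ℕ), g p.1 * ∏ i, g (p.2 i) := by
          rw [← (Fin.consEquiv fun _ => ℕ).tsum_eq]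
          simp [Fin.consEquiv, Fin.prod_univ_succ]
      _ = ∑' n, g n * ∑' k : Fin N → ℕ, ∏ i, g (k i) := by
          rw [ENNReal.tsum_prod']
          simp_rw [ENNReal.tsum_mul_left]
      _ = (∑' n, g n) ^ (N + 1) := by rw [ENNReal.tsum_mul_right, ih, pow_succ']

lemma prevJ_of_val_eq_zero {N : ℕ} (j : Fin N → ℕ) {i : Fin N} (h : (i : ℕ) = 0) :
    prevJ j i = 0 := dif_pos h

lemma prevJ_succ {N : ℕ} (j : Fin N → ℕ) (m : ℕ) (h : m + 1 < N) :
    prevJ j ⟨m + 1, h⟩ = j ⟨m, by omega⟩ :=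
  dif_neg m.succ_ne_zero

lemma strictMono_of_prevJ_lt {N : ℕ} {j : Fin N → ℕ} (hj : ∀ i, prevJ j i < j i) :
    StrictMono j := by
  cases N with
  | zero => exact fun i => i.elim0
  | succ n =>
    refine Fin.strictMono_iff_lt_succ.2 fun i => ?_
    have := hj i.succ
    rwa [Fin.succ_mk, prevJ_succ] at this

/-- Gaps are shifted by one, so that every `k : Fin N → ℕ` encodes an admissible chain. -/
def chainOfGaps {N : ℕ} (k : Fin N → ℕ) (i : Fin N) : ℕ :=
  ∑ t ∈ Finset.Iic i, (k t + 1)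

lemma prevJ_chainOfGaps_add {N : ℕ} (k : Fin N → ℕ) (i : Fin N) :
    prevJ (chainOfGaps k) i + (k i + 1) = chainOfGaps k i := by
  obtain ⟨_ | m, hi⟩ := i
  · have hIic : Finset.Iic (⟨0, hi⟩ : Fin N) = {⟨0, hi⟩} := by
      ext x; simp [Fin.le_def, Fin.ext_iff]
    simp [prevJ_of_val_eq_zero, chainOfGaps, hIic]
  · have hIic : Finset.Iic (⟨m + 1, hi⟩ : Fin N) =
        insert ⟨m + 1, hi⟩ (Finset.Iic ⟨m, by omega⟩) := by
      ext x; simp [Fin.le_def, Fin.ext_iff]; omega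
    rw [prevJ_succ, chainOfGaps, chainOfGaps, hIic, Finset.sum_insert (by simp), add_comm]

lemma chainOfGaps_sub_prevJ {N : ℕ} (k : Fin N → ℕ) (i : Fin N) :
    chainOfGaps k i - prevJ (chainOfGaps k) i = k i + 1 := by
  have := prevJ_chainOfGaps_add k i; omega

lemma prevJ_chainOfGaps_lt {N : ℕ} (k : Fin N → ℕ) (i : Fin N) :
    prevJ (chainOfGaps k) i < chainOfGaps k i := by
  have := prevJ_chainOfGaps_add k i; omega

lemma chainOfGaps_injective {N : ℕ} : Function.Injective (chainOfGaps (N := N)) := by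
  intro k k' h
  funext i
  have := chainOfGaps_sub_prevJ k i
  rw [h, chainOfGaps_sub_prevJ] at this
  omega

lemma chainOfGaps_gaps {N : ℕ} {j : Fin N → ℕ} (hj : ∀ i, prevJ j i < j i) :
    chainOfGaps (fun i => j i - prevJ j i - 1) = j := by
  suffices ∀ m (h : m < N), chainOfGaps (fun i => j i - prevJ j i - 1) ⟨m, h⟩ = j ⟨m, h⟩ from
    funext fun i => this i i.2
  intro m
  induction m with
  | zero =>
    intro h
    have := hj ⟨0, h⟩
    rw [← prevJ_chainOfGaps_add, prevJ_of_val_eq_zero _ rfl, prevJ_of_val_eq_zero _ rfl] at *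
    omega
  | succ m ih =>
    intro h
    have := hj ⟨m + 1, h⟩
    rw [← prevJ_chainOfGaps_add, prevJ_succ, prevJ_succ, ih] at *
    omega

theorem tsum_chains_prod_gaps (g : ℕ → ℝ≥0∞) (N : ℕ) :
    ∑' j : Fin N → ℕ, (if ∀ i, prevJ j i < j i then ∏ i, g (j i - prevJ j i) else 0)
      = (∑' n, g (n + 1)) ^ N := by
  rw [← ENNReal.tsum_pi_fin_prod]
  refine tsum_eq_tsum_of_ne_zero_bij (fun k => chainOfGaps k.1)
    (fun k k' h => Subtype.ext (chainOfGaps_injective h)) ?_ ?_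
  · intro j hj
    have hchain : ∀ i, prevJ j i < j i := by
      by_contra h
      exact hj (if_neg h)
    refine ⟨⟨fun i => j i - prevJ j i - 1, ?_⟩, chainOfGaps_gaps hchain⟩
    intro h0
    refine hj ?_
    dsimp only at h0 ⊢
    rw [if_pos hchain, ← h0]
    refine Finset.prod_congr rfl fun i _ => ?_
    have := hchain i
    congr 1
    omega
  · intro k
    simp only [if_pos (prevJ_chainOfGaps_lt k.1), chainOfGaps_sub_prevJ]

theorem SN_rpow_le_SN_mul (α : ℝ) {β : ℝ} (hβ0 : 0 < β) (hβ1 : β ≤ 1) (N : ℕ) (ω : ℕ → Bool) :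
    SN α N ω ^ β ≤ SN (α * β) N ω := by
  refine (ENNReal.rpow_tsum_le_tsum_rpow _ hβ0 hβ1).trans_eq (tsum_congr fun j => ?_)
  split_ifs
  · rw [← ENNReal.prod_rpow_of_nonneg hβ0.le]
    simp_rw [← ENNReal.rpow_mul, neg_mul]
  · exact ENNReal.zero_rpow_of_pos hβ0

theorem iIndepFun.measure_forall_eq_true {Ω ι : Type*} [MeasurableSpace Ω] [Fintype ι]
    {μ : Measure Ω} {X : ℕ → Ω → Bool} (hindep : iIndepFun X μ) {c : ℝ≥0∞}
    (hX : ∀ l, μ {a | X l a = true} = c) {j : ι → ℕ} (hj : Function.Injective j) :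
    μ {a | ∀ i, X (j i) a = true} = c ^ Fintype.card ι := by
  rw [Set.ofPred_forall, (hindep.precomp hj).meas_iInter (s := fun i => {a | X (j i) a = true})
    fun i => ⟨{true}, trivial, rfl⟩]
  simp [hX]

theorem lintegral_SN {Ω : Type*} [MeasurableSpace Ω] {μ : Measure Ω} {X : ℕ → Ω → Bool}
    (hmeas : ∀ l, Measurable (X l)) (hindep : iIndepFun X μ) {c : ℝ≥0∞}
    (hX : ∀ l, μ {a | X l a = true} = c) (q : ℝ) (N : ℕ) :
    ∫⁻ a, SN q N (fun l => X l a) ∂μ = (c * zetaE q) ^ N := by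
  set w : (Fin N → ℕ) → ℝ≥0∞ := fun j =>
    if ∀ i, prevJ j i < j i then ∏ i, ((j i - prevJ j i : ℕ) : ℝ≥0∞) ^ (-q) else 0
  have hterm : ∀ (j : Fin N → ℕ) a,
      (if (∀ i, prevJ j i < j i) ∧ (∀ i, X (j i) a = true)
        then ∏ i, ((j i - prevJ j i : ℕ) : ℝ≥0∞) ^ (-q) else 0)
        = {a | ∀ i, X (j i) a = true}.indicator (fun _ => w j) a := by
    intro j a
    by_cases h : ∀ i, X (j i) a = true <;> simp [w, h]
  have hS : ∀ j : Fin N → ℕ, MeasurableSet {a | ∀ i, X (j i) a = true} := by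
    intro j; measurability
  have hint : ∀ j, ∫⁻ a, {a | ∀ i, X (j i) a = true}.indicator (fun _ => w j) a ∂μ
      = w j * c ^ N := by
    intro j
    rw [lintegral_indicator_const (hS j)]
    by_cases hj : ∀ i, prevJ j i < j i
    · rw [iIndepFun.measure_forall_eq_true hindep hX (strictMono_of_prevJ_lt hj).injective,
        Fintype.card_fin]
    · simp [w, hj]
  calc ∫⁻ a, SN q N (fun l => X l a) ∂μ
      = ∑' j, ∫⁻ a, {a | ∀ i, X (j i) a = true}.indicator (fun _ => w j) a ∂μ := by
        simp_rw [SN, hterm]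
        exact lintegral_tsum fun j => (measurable_const.indicator (hS j)).aemeasurable
    _ = (∑' j, w j) * c ^ N := by simp_rw [hint, ENNReal.tsum_mul_right]
    _ = (c * zetaE q) ^ N := by
        rw [mul_pow, mul_comm]
        congr 1
        exact tsum_chains_prod_gaps (fun n => (n : ℝ≥0∞) ^ (-q)) N

theorem fractional_moment_bound_general
    {Ω : Type*} [MeasurableSpace Ω] (μ : Measure Ω)
    (X : ℕ → Ω → Bool)
    (hmeas : ∀ l, Measurable (X l))
    (hindep : iIndepFun X μ)
    (p : ℝ)
    (hX : ∀ l, μ {a | X l a = true} = ENNReal.ofReal p)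
    (α : ℝ) (hα : 1 < α)
    (β : ℝ) (hβ : β ∈ Set.Ioc (1 / α) 1)
    (N : ℕ) :
    ∫⁻ a, (SN α N (fun l => X l a)) ^ β ∂μ
      ≤ (ENNReal.ofReal p * zetaE (α * β)) ^ N := by
  have hβ0 : 0 < β := (one_div_pos.2 (zero_lt_one.trans hα)).trans hβ.1
  calc ∫⁻ a, (SN α N (fun l => X l a)) ^ β ∂μ
      ≤ ∫⁻ a, SN (α * β) N (fun l => X l a) ∂μ :=
        lintegral_mono fun a => SN_rpow_le_SN_mul α hβ0 hβ.2 N _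
    _ = (ENNReal.ofReal p * zetaE (α * β)) ^ N := lintegral_SN hmeas hindep hX (α * β) N

/-- **Fractional moment bound** for the renewal sum along an i.i.d. Bernoulli(p)
sequence: for `β ∈ (1/α, 1]`, `E[S_N(ω)^β] ≤ (p ζ(αβ))^N`. -/
theorem fractional_moment_bound
    {Ω : Type*} [MeasurableSpace Ω] (μ : Measure Ω) [IsProbabilityMeasure μ]
    (X : ℕ → Ω → Bool)
    (hmeas : ∀ l, Measurable (X l))
    (hindep : iIndepFun X μ)
    (p : ℝ) (hp : p ∈ Set.Ioo (0 : ℝ) 1)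
    (hX : ∀ l, μ {a | X l a = true} = ENNReal.ofReal p)
    (α : ℝ) (hα : 1 < α)
    (β : ℝ) (hβ : β ∈ Set.Ioc (1 / α) 1)
    (N : ℕ) :
    ∫⁻ a, (SN α N (fun l => X l a)) ^ β ∂μ
      ≤ (ENNReal.ofReal p * zetaE (α * β)) ^ N :=
  fractional_moment_bound_general μ X hmeas hindep p hX α hα β hβ N

end
end

section
/- Let (ω_l)_{l∈ℕ} be i.i.d. Bernoulli(p), p ∈ (0,1). Let τ_N be the first index l such that ω_l = ω_{l+1} = ... = ω_{l+N-1} = 1 (the start of the first run of N consecutive ones). Then almost surely lim_{N→∞} (1/N) log τ_N = log(1/p). -/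
/-!
Write `q = 1/p`. Runs of `N` ones starting at the `⌊q^{(1-ε)N}⌋` positions `l ≤ q^{(1-ε)N}` have
total probability at most `q^{(1-ε)N} p^N = p^{εN}`, so by Borel–Cantelli eventually none occurs and
`τ_N > q^{(1-ε)N}`. For the upper bound, cut `[1, ∞)` into disjoint blocks of length `N`: the first
`m = ⌈q^{(1+ε)N}⌉` blocks are independent, so none of them is all ones with probability
`(1 - p^N)^m ≤ exp(-m p^N) ≤ p^{εN}`, again summable; hence eventually `τ_N ≤ mN`.
Letting `ε = 1/(k+1)` for every `k` gives `log τ_N / N → log q` almost surely.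
-/

open MeasureTheory ProbabilityTheory Filter
open scoped ENNReal Classical

noncomputable section

/-- `τ_N(ω)`: the first index `l ≥ 1` at which a run of `N` consecutive ones starts. -/
def firstRun (N : ℕ) (ω : ℕ → Bool) : ℕ :=
  sInf {l : ℕ | 1 ≤ l ∧ ∀ k < N, ω (l + k) = true}

open Real Topology Function

lemma ProbabilityTheory.iIndep.measure_biInter_eq_prod_of_pairwise_disjoint
    {Ω ι κ : Type*} {mΩ : MeasurableSpace Ω} {μ : Measure Ω} {m : ι → MeasurableSpace Ω}
    (hle : ∀ i, m i ≤ mΩ) (hind : iIndep m μ) {S : κ → Set ι} (hS : Pairwise (Disjoint on S))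
    {E : κ → Set Ω} (hE : ∀ j, MeasurableSet[⨆ i ∈ S j, m i] (E j)) (s : Finset κ) :
    μ (⋂ j ∈ s, E j) = ∏ j ∈ s, μ (E j) := by
  have := hind.isProbabilityMeasure
  induction s using Finset.induction_on with
  | empty => simp
  | insert a s ha ih =>
    have hdisj : Disjoint (⋃ j ∈ s, S j) (S a) :=
      Set.disjoint_iUnion₂_left.2 fun j hj => hS (ne_of_mem_of_not_mem hj ha)
    have hmeas : MeasurableSet[⨆ i ∈ ⋃ j ∈ s, S j, m i] (⋂ j ∈ s, E j) :=
      .biInter s.countable_toSet fun j hj =>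
        MeasurableSpace.le_def.1 (biSup_mono fun i hi => Set.mem_biUnion hj hi) _ (hE j)
    rw [Finset.set_biInter_insert, Set.inter_comm, Finset.prod_insert ha, ← ih, mul_comm]
    exact (Indep_iff _ _ _).1 (indep_iSup_of_disjoint hle hind hdisj) _ _ hmeas (hE a)

lemma ae_eventually_notMem_of_le_geometric {α : Type*} [MeasurableSpace α] {μ : Measure α}
    {s : ℕ → Set α} {r : ℝ≥0∞} (hr : r < 1) (h : ∀ n, μ (s n) ≤ r ^ n) :
    ∀ᵐ x ∂μ, ∀ᶠ n in atTop, x ∉ s n := by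
  refine ae_eventually_notMem (ne_top_of_le_ne_top ?_ (ENNReal.tsum_le_tsum h))
  rw [ENNReal.tsum_geometric]
  exact ENNReal.inv_ne_top.2 (tsub_pos_of_lt hr).ne'

lemma one_sub_pow_le_inv_mul {x y : ℝ} {n : ℕ} (hy0 : 0 ≤ y) (hy1 : y ≤ 1) (hxy : 0 < x * y)
    (hxn : x ≤ n) : (1 - y) ^ n ≤ (x * y)⁻¹ :=
  calc (1 - y) ^ n ≤ exp (-y) ^ n := pow_le_pow_left₀ (by linarith) (one_sub_le_exp_neg y) n
    _ = exp (-(n * y)) := by rw [← exp_nat_mul]; ring_nf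
    _ ≤ exp (-(x * y)) := exp_le_exp.2 (by nlinarith)
    _ ≤ (x * y)⁻¹ := by
      rw [exp_neg]
      exact inv_anti₀ hxy (by linarith [add_one_le_exp (x * y)])

lemma one_div_rpow_mul_pow {p : ℝ} (hp : 0 < p) (c : ℝ) (N : ℕ) :
    (1 / p) ^ (c * N) * p ^ N = (p ^ (1 - c)) ^ N := by
  rw [one_div, inv_rpow hp.le, ← rpow_neg hp.le, ← rpow_natCast, ← rpow_natCast, ← rpow_add hp,
    ← rpow_mul hp.le]
  ring_nf

lemma tendsto_of_forall_eventually_bounds {u v δ : ℕ → ℝ} {L : ℝ}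
    (hδ : Tendsto δ atTop (𝓝 0)) (hv : Tendsto v atTop (𝓝 0))
    (h : ∀ k, ∀ᶠ N in atTop, L - δ k ≤ u N ∧ u N ≤ L + δ k + v N) :
    Tendsto u atTop (𝓝 L) := by
  rw [tendsto_order]
  constructor
  · intro c hc
    obtain ⟨k, hk⟩ := (hδ.eventually (gt_mem_nhds (sub_pos.2 hc))).exists
    filter_upwards [h k] with N hN
    linarith [hN.1]
  · intro c hc
    have hc2 : 0 < (c - L) / 2 := by linarith
    obtain ⟨k, hk⟩ := (hδ.eventually (gt_mem_nhds hc2)).exists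
    filter_upwards [h k, hv.eventually (gt_mem_nhds hc2)] with N hN hvN
    linarith [hN.2]

lemma tendsto_log_two_add_log_div_nat :
    Tendsto (fun N : ℕ => (log 2 + log N) / N) atTop (𝓝 0) := by
  have h := (tendsto_const_div_atTop_nhds_zero_nat (log 2)).add
    (isLittleO_log_id_atTop.tendsto_div_nhds_zero.comp tendsto_natCast_atTop_atTop)
  rw [add_zero] at h
  exact h.congr fun N => (add_div _ _ _).symm

lemma firstRun_mem_Ioc {ω : ℕ → Bool} {N m M : ℕ}
    (hrun : ∃ l, 1 ≤ l ∧ l ≤ M ∧ ∀ k < N, ω (l + k) = true)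
    (hnone : ∀ l, 1 ≤ l → l ≤ m → ¬ ∀ k < N, ω (l + k) = true) :
    firstRun N ω ∈ Set.Ioc m M := by
  obtain ⟨l, hl1, hlM, hl⟩ := hrun
  have hne : {l | 1 ≤ l ∧ ∀ k < N, ω (l + k) = true}.Nonempty := ⟨l, hl1, hl⟩
  obtain ⟨hτ1, hτ⟩ : 1 ≤ firstRun N ω ∧ ∀ k < N, ω (firstRun N ω + k) = true := Nat.sInf_mem hne
  have hτl : firstRun N ω ≤ l := Nat.sInf_le ⟨hl1, hl⟩
  exact ⟨not_le.1 fun hτm => hnone _ hτ1 hτm hτ, hτl.trans hlM⟩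

lemma log_div_bounds_of_mem_Ioc {q a b : ℝ} (hq : 1 < q) (hb : 0 ≤ b) {N t : ℕ} (hN : 1 ≤ N)
    (ht : t ∈ Set.Ioc ⌊q ^ (a * N)⌋₊ (⌈q ^ (b * N)⌉₊ * N)) :
    a * log q ≤ log t / N ∧ log t / N ≤ b * log q + (log 2 + log N) / N := by
  have hq0 : 0 < q := by linarith
  have hN0 : (0 : ℝ) < N := by exact_mod_cast hN
  have hlow : q ^ (a * N) < t := (Nat.floor_lt (rpow_nonneg hq0.le _)).1 ht.1
  have hy : 1 ≤ q ^ (b * N) := one_le_rpow hq.le (by positivity)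
  have hup : (t : ℝ) ≤ 2 * q ^ (b * N) * N := by
    calc (t : ℝ) ≤ (⌈q ^ (b * N)⌉₊ * N : ℕ) := by exact_mod_cast ht.2
      _ = ⌈q ^ (b * N)⌉₊ * N := by push_cast; ring
      _ ≤ 2 * q ^ (b * N) * N := by gcongr; exact Nat.ceil_le_two_mul (by linarith)
  have htpos : (0 : ℝ) < t := (rpow_pos_of_pos hq0 _).trans hlow
  constructor
  · rw [le_div_iff₀ hN0]
    calc a * log q * N = log (q ^ (a * N)) := by rw [log_rpow hq0]; ring
      _ ≤ log t := log_le_log (rpow_pos_of_pos hq0 _) hlow.le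
  · rw [div_le_iff₀ hN0, add_mul, div_mul_cancel₀ _ hN0.ne']
    calc log t ≤ log (2 * q ^ (b * N) * N) := log_le_log htpos hup
      _ = b * log q * N + (log 2 + log N) := by
        rw [log_mul (by positivity) hN0.ne', log_mul two_ne_zero (by positivity), log_rpow hq0]
        ring

lemma tendsto_log_div_of_mem_Ioc {t : ℕ → ℕ} {q : ℝ} (hq : 1 < q) {ε : ℕ → ℝ}
    (hε0 : ∀ k, 0 ≤ ε k) (hε : Tendsto ε atTop (𝓝 0))
    (h : ∀ k, ∀ᶠ N : ℕ in atTop,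
      t N ∈ Set.Ioc ⌊q ^ ((1 - ε k) * N)⌋₊ (⌈q ^ ((1 + ε k) * N)⌉₊ * N)) :
    Tendsto (fun N => log (t N) / N) atTop (𝓝 (log q)) := by
  refine tendsto_of_forall_eventually_bounds (δ := fun k => ε k * log q)
    (by simpa using hε.mul_const (log q)) tendsto_log_two_add_log_div_nat fun k => ?_
  filter_upwards [h k, eventually_ge_atTop 1] with N hN hN1
  have := log_div_bounds_of_mem_Ioc hq (by linarith [hε0 k]) hN1 hN
  constructor <;> linarith

section Runs

variable {Ω : Type*} {X : ℕ → Ω → Bool}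

def runSet (X : ℕ → Ω → Bool) (N l : ℕ) : Set Ω :=
  ⋂ i ∈ Finset.Ico l (l + N), X i ⁻¹' {true}

lemma mem_runSet {N l : ℕ} {a : Ω} : a ∈ runSet X N l ↔ ∀ k < N, X (l + k) a = true := by
  simp only [runSet, Set.mem_iInter, Finset.mem_Ico, Set.mem_preimage, Set.mem_singleton_iff]
  refine ⟨fun h k hk => h _ ⟨by omega, by omega⟩, fun h i ⟨hli, hiN⟩ => ?_⟩
  obtain ⟨k, rfl⟩ := Nat.exists_eq_add_of_le hli
  exact h k (by omega)

lemma measurableSet_runSet (N l : ℕ) :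
    MeasurableSet[⨆ i ∈ Set.Ico l (l + N), MeasurableSpace.comap (X i) inferInstance]
      (runSet X N l) :=
  .biInter (Finset.countable_toSet _) fun i hi =>
    MeasurableSpace.le_def.1 (le_iSup₂ (f := fun i (_ : i ∈ Set.Ico l (l + N)) =>
      MeasurableSpace.comap (X i) inferInstance) i (by simpa using hi))
      _ ⟨{true}, measurableSet_singleton true, rfl⟩

variable [MeasurableSpace Ω] {μ : Measure Ω} {p : ℝ}

lemma measure_runSet (hindep : iIndepFun X μ)
    (hX : ∀ l, μ {a | X l a = true} = ENNReal.ofReal p) (N l : ℕ) :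
    μ (runSet X N l) = ENNReal.ofReal p ^ N := by
  rw [runSet, hindep.meas_biInter fun i _ => ⟨{true}, measurableSet_singleton true, rfl⟩]
  simp only [Set.preimage, Set.mem_singleton_iff, hX, Finset.prod_const, Nat.card_Ico,
    Nat.add_sub_cancel_left]

lemma measure_biInter_range_compl_runSet (hmeas : ∀ l, Measurable (X l))
    (hindep : iIndepFun X μ) (hX : ∀ l, μ {a | X l a = true} = ENNReal.ofReal p) (N m : ℕ) :
    μ (⋂ j ∈ Finset.range m, (runSet X N (1 + j * N))ᶜ) = (1 - ENNReal.ofReal p ^ N) ^ m := by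
  have := hindep.isProbabilityMeasure
  have hmono : Monotone fun j : ℕ => 1 + j * N := fun i j h => by dsimp only; gcongr
  have hblocks : Pairwise (Disjoint on fun j : ℕ => Set.Ico (1 + j * N) (1 + j * N + N)) := by
    simpa [add_mul, add_assoc] using hmono.pairwise_disjoint_on_Ico_succ
  rw [hindep.iIndep.measure_biInter_eq_prod_of_pairwise_disjoint (fun i => (hmeas i).comap_le)
    hblocks fun j => (measurableSet_runSet N _).compl]
  simp only [prob_compl_eq_one_sub (iSup₂_le (fun i _ => (hmeas i).comap_le) _
    (measurableSet_runSet N _)), measure_runSet hindep hX,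
    Finset.prod_const, Finset.card_range]

lemma ae_eventually_forall_notMem_runSet (hindep : iIndepFun X μ) (hp : p ∈ Set.Ioo 0 1)
    (hX : ∀ l, μ {a | X l a = true} = ENNReal.ofReal p) {ε : ℝ} (hε : 0 < ε) :
    ∀ᵐ a ∂μ, ∀ᶠ N : ℕ in atTop,
      ∀ l ∈ Finset.Icc 1 ⌊(1 / p) ^ ((1 - ε) * N)⌋₊, a ∉ runSet X N l := by
  have hp0 := hp.1
  have hbound (N : ℕ) : μ (⋃ l ∈ Finset.Icc 1 ⌊(1 / p) ^ ((1 - ε) * N)⌋₊, runSet X N l)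
      ≤ ENNReal.ofReal (p ^ ε) ^ N := by
    set x := (1 / p) ^ ((1 - ε) * N)
    calc _ ≤ ∑ l ∈ Finset.Icc 1 ⌊x⌋₊, μ (runSet X N l) := measure_biUnion_finset_le _ _
      _ = ENNReal.ofReal (⌊x⌋₊ * p ^ N) := by
        rw [ENNReal.ofReal_mul (by positivity), ENNReal.ofReal_natCast, ENNReal.ofReal_pow hp0.le]
        simp [measure_runSet hindep hX]
      _ ≤ ENNReal.ofReal (x * p ^ N) :=
        ENNReal.ofReal_le_ofReal (by gcongr; exact Nat.floor_le (by positivity))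
      _ = ENNReal.ofReal (p ^ ε) ^ N := by
        rw [one_div_rpow_mul_pow hp0, sub_sub_cancel, ENNReal.ofReal_pow (by positivity)]
  filter_upwards [ae_eventually_notMem_of_le_geometric
    (ENNReal.ofReal_lt_one.2 (rpow_lt_one hp0.le hp.2 hε)) hbound] with a ha
  filter_upwards [ha] with N hN
  simpa using hN

lemma ae_eventually_exists_mem_runSet (hmeas : ∀ l, Measurable (X l)) (hindep : iIndepFun X μ)
    (hp : p ∈ Set.Ioo 0 1) (hX : ∀ l, μ {a | X l a = true} = ENNReal.ofReal p) {ε : ℝ}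
    (hε : 0 < ε) :
    ∀ᵐ a ∂μ, ∀ᶠ N : ℕ in atTop,
      ∃ j < ⌈(1 / p) ^ ((1 + ε) * N)⌉₊, a ∈ runSet X N (1 + j * N) := by
  have hp0 := hp.1
  have hbound (N : ℕ) :
      μ (⋂ j ∈ Finset.range ⌈(1 / p) ^ ((1 + ε) * N)⌉₊, (runSet X N (1 + j * N))ᶜ)
        ≤ ENNReal.ofReal (p ^ ε) ^ N := by
    set x := (1 / p) ^ ((1 + ε) * N)
    have hpN : p ^ N ≤ 1 := pow_le_one₀ hp0.le hp.2.le
    have hxp : x * p ^ N = ((p ^ ε) ^ N)⁻¹ := by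
      rw [one_div_rpow_mul_pow hp0, sub_add_cancel_left, rpow_neg hp0.le, inv_pow]
    rw [measure_biInter_range_compl_runSet hmeas hindep hX, ← ENNReal.ofReal_pow hp0.le,
      ← ENNReal.ofReal_one, ← ENNReal.ofReal_sub _ (by positivity),
      ← ENNReal.ofReal_pow (by linarith), ← ENNReal.ofReal_pow (by positivity)]
    refine ENNReal.ofReal_le_ofReal ?_
    calc (1 - p ^ N) ^ ⌈x⌉₊ ≤ (x * p ^ N)⁻¹ :=
          one_sub_pow_le_inv_mul (by positivity) hpN (by positivity) (Nat.le_ceil x)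
      _ = (p ^ ε) ^ N := by rw [hxp, inv_inv]
  filter_upwards [ae_eventually_notMem_of_le_geometric
    (ENNReal.ofReal_lt_one.2 (rpow_lt_one hp0.le hp.2 hε)) hbound] with a ha
  filter_upwards [ha] with N hN
  simpa using hN

lemma ae_eventually_firstRun_mem_Ioc (hmeas : ∀ l, Measurable (X l)) (hindep : iIndepFun X μ)
    (hp : p ∈ Set.Ioo 0 1) (hX : ∀ l, μ {a | X l a = true} = ENNReal.ofReal p) {ε : ℝ}
    (hε : 0 < ε) :
    ∀ᵐ a ∂μ, ∀ᶠ N : ℕ in atTop, firstRun N (fun l => X l a) ∈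
      Set.Ioc ⌊(1 / p) ^ ((1 - ε) * N)⌋₊ (⌈(1 / p) ^ ((1 + ε) * N)⌉₊ * N) := by
  filter_upwards [ae_eventually_forall_notMem_runSet hindep hp hX hε,
    ae_eventually_exists_mem_runSet hmeas hindep hp hX hε] with a hlow hup
  filter_upwards [hlow, hup, eventually_ge_atTop 1] with N hnone ⟨j, hj, hrun⟩ hN
  have hjN : 1 + j * N ≤ ⌈(1 / p) ^ ((1 + ε) * N)⌉₊ * N :=
    calc 1 + j * N ≤ (j + 1) * N := by rw [add_mul]; omega
      _ ≤ _ := Nat.mul_le_mul_right N hj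
  exact firstRun_mem_Ioc ⟨1 + j * N, by omega, hjN, mem_runSet.1 hrun⟩
    fun l hl1 hlm hl => hnone l (Finset.mem_Icc.2 ⟨hl1, hlm⟩) (mem_runSet.2 hl)

end Runs

theorem firstRun_log_tendsto_general
    {Ω : Type*} [MeasurableSpace Ω] (μ : Measure Ω)
    (X : ℕ → Ω → Bool)
    (hmeas : ∀ l, Measurable (X l))
    (hindep : iIndepFun X μ)
    (p : ℝ) (hp : p ∈ Set.Ioo (0 : ℝ) 1)
    (hX : ∀ l, μ {a | X l a = true} = ENNReal.ofReal p) :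
    ∀ᵐ a ∂μ,
      Filter.Tendsto
        (fun N : ℕ => Real.log (firstRun N (fun l => X l a)) / N)
        atTop (nhds (Real.log (1 / p))) := by
  have hε (k : ℕ) : (0 : ℝ) < 1 / ((k : ℝ) + 1) := by positivity
  filter_upwards [ae_all_iff.2 fun k => ae_eventually_firstRun_mem_Ioc hmeas hindep hp hX (hε k)]
    with a ha
  exact tendsto_log_div_of_mem_Ioc ((one_lt_div hp.1).2 hp.2) (fun k => (hε k).le)
    tendsto_one_div_add_atTop_nhds_zero_nat ha

/-- **LLN for the first run of `N` consecutive successes**: almost surely,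
`(1/N) log τ_N → log(1/p)`. -/
theorem firstRun_log_tendsto
    {Ω : Type*} [MeasurableSpace Ω] (μ : Measure Ω) [IsProbabilityMeasure μ]
    (X : ℕ → Ω → Bool)
    (hmeas : ∀ l, Measurable (X l))
    (hindep : iIndepFun X μ)
    (p : ℝ) (hp : p ∈ Set.Ioo (0 : ℝ) 1)
    (hX : ∀ l, μ {a | X l a = true} = ENNReal.ofReal p) :
    ∀ᵐ a ∂μ,
      Filter.Tendsto
        (fun N : ℕ => Real.log (firstRun N (fun l => X l a)) / N)
        atTop (nhds (Real.log (1 / p))) :=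
  firstRun_log_tendsto_general μ X hmeas hindep p hp hX

end
end

section
/- Monotone convergence of coarse-grained relative entropy (Deuschel–Stroock): let G be a Polish space and (A_c)_{c∈ℕ} a sequence of nested finite measurable partitions of G such that the diameter of the partition element containing any fixed x tends to 0 as c → ∞. Then for any probability measures μ, ν on G, the relative entropies of the coarse-grainings satisfy h(⟨μ⟩_c | ⟨ν⟩_c) ↗ h(μ | ν) as c → ∞. -/
open MeasureTheory Filter
open scoped ENNReal Classical

noncomputable section

/-- Relative entropy (Kullback–Leibler divergence) of two measures on a finite
(discrete) space, with value `+∞` when absolute continuity fails. -/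
def klFin {F : Type*} [Fintype F] [MeasurableSpace F] (μ ν : Measure F) : ℝ≥0∞ :=
  if ∀ x : F, ν {x} = 0 → μ {x} = 0 then
    ENNReal.ofReal
      (∑ x : F, (μ {x}).toReal * Real.log ((μ {x}).toReal / (ν {x}).toReal))
  else ∞

/-- Relative entropy of two measures on a general measurable space, defined as the
supremum of the relative entropies of their images under maps to finite spaces
(the finite-partition variational characterisation). -/
def relEntropy {G : Type*} [MeasurableSpace G] (μ ν : Measure G) : ℝ≥0∞ :=
  ⨆ (n : ℕ) (f : G → Fin n) (_ : Measurable f), klFin (μ.map f) (ν.map f)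

/-!
Monotonicity is the data processing inequality, which `klFin` inherits from Mathlib's `klDiv`:
the two agree for probability measures on a finite space.

For the limit, every coarse-graining is bounded by `relEntropy μ ν`, so it remains to bound
`klFin (μ.map g) (ν.map g)` by `⨆ c, klFin (μ.map (f c)) (ν.map (f c))` for measurable
`g : G → Fin n`. Since the cells shrink to points, every open set is a countable union of cells,
so the σ-algebras pulled back along the `f c` increase to the Borel σ-algebra. Approximating the
level sets of `g` by unions of cells produces maps `k c ∘ f c` converging to `g` in
`(μ + ν)`-measure, so the masses of their level sets converge to those of `g`. Since `k c ∘ f c`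
coarsens `f c`, its `klFin` is at most the `c`-th one; and `klFin` is lower semicontinuous in
these masses, being a sum of values of the lower semicontinuous perspective
`(a, b) ↦ b * klFun (a / b)` of `klFun`.
-/

open InformationTheory Topology Real

namespace MeasureTheory.Measure

variable {E : Type*} [MeasurableSpace E]

lemma absolutelyContinuous_iff_forall_singleton [Countable E] {μ ν : Measure E} :
    μ ≪ ν ↔ ∀ x, ν {x} = 0 → μ {x} = 0 := by
  refine ⟨fun h x hx => h hx, fun h s hs => ?_⟩
  rw [← Set.biUnion_of_singleton s, measure_biUnion_null_iff s.to_countable] at hs ⊢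
  exact fun x hx => h x (hs x hx)

lemma rnDeriv_eq_div_of_measure_singleton_ne_zero [MeasurableSingletonClass E] {μ ν : Measure E}
    [IsFiniteMeasure μ] [IsFiniteMeasure ν] (hμν : μ ≪ ν) {x : E} (hx : ν {x} ≠ 0) :
    μ.rnDeriv ν x = μ {x} / ν {x} := by
  rw [ENNReal.eq_div_iff hx (measure_ne_top ν _), mul_comm, ← lintegral_singleton,
    setLIntegral_rnDeriv hμν]

end MeasureTheory.Measure

/-- The perspective `b * klFun (a / b) = a * log (a / b) + b - a` of `klFun` for `b > 0`; the
values for `b ≤ 0` make it lower semicontinuous on all of `ℝ × ℝ`. -/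
def klPerspective (a b : ℝ) : ℝ≥0∞ :=
  if 0 < b then ENNReal.ofReal (b * klFun (a / b)) else if 0 < a then ∞ else 0

lemma klPerspective_of_pos {a b : ℝ} (hb : 0 < b) :
    klPerspective a b = ENNReal.ofReal (b * klFun (a / b)) :=
  if_pos hb

lemma mul_klFun_div {a b : ℝ} (hb : b ≠ 0) : b * klFun (a / b) = a * log (a / b) + b - a := by
  rw [klFun_apply]
  field_simp

lemma klPerspective_eq_ofReal {a b : ℝ} (hb : 0 ≤ b) (hab : b = 0 → a = 0) :
    klPerspective a b = ENNReal.ofReal (a * log (a / b) + b - a) := by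
  rcases hb.lt_or_eq with hb | rfl
  · rw [klPerspective_of_pos hb, mul_klFun_div hb.ne']
  · simp [klPerspective, hab rfl]

lemma mul_log_div_add_sub_nonneg {a b : ℝ} (ha : 0 ≤ a) (hb : 0 ≤ b) (hab : b = 0 → a = 0) :
    0 ≤ a * log (a / b) + b - a := by
  rcases hb.lt_or_eq with hb | rfl
  · rw [← mul_klFun_div hb.ne']
    exact mul_nonneg hb.le (klFun_nonneg (div_nonneg ha hb.le))
  · simp [hab rfl]

lemma tendsto_mul_klFun_div_nhdsWithin {a : ℝ} (ha : 0 < a) :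
    Tendsto (fun p : ℝ × ℝ => p.2 * klFun (p.1 / p.2)) (𝓝[{p | 0 < p.2}] (a, 0)) atTop := by
  have hfst : Tendsto Prod.fst (𝓝[{p : ℝ × ℝ | 0 < p.2}] (a, 0)) (𝓝 a) :=
    continuous_fst.continuousWithinAt.tendsto
  have hsnd : Tendsto Prod.snd (𝓝[{p : ℝ × ℝ | 0 < p.2}] (a, 0)) (𝓝[>] 0) :=
    tendsto_nhdsWithin_iff.2 ⟨continuous_snd.continuousWithinAt.tendsto,
      eventually_nhdsWithin_of_forall fun p hp => hp⟩
  have hlog : Tendsto (fun p : ℝ × ℝ => log (p.1 / p.2)) (𝓝[{p | 0 < p.2}] (a, 0)) atTop :=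
    tendsto_log_atTop.comp (hfst.pos_mul_atTop ha (tendsto_inv_nhdsGT_zero.comp hsnd))
  refine ((hfst.pos_mul_atTop ha hlog).atTop_add
    ((continuous_snd.continuousWithinAt.tendsto).sub hfst)).congr'
    (eventually_nhdsWithin_of_forall fun p (hp : 0 < p.2) => ?_)
  simp only [mul_klFun_div hp.ne', add_sub_assoc]

lemma lowerSemicontinuous_klPerspective :
    LowerSemicontinuous (Function.uncurry klPerspective) := by
  rintro ⟨a, b⟩ y hy
  rcases lt_or_ge 0 b with hb | hb
  · have hcont :
        ContinuousAt (fun p : ℝ × ℝ => ENNReal.ofReal (p.2 * klFun (p.1 / p.2))) (a, b) :=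
      ENNReal.continuous_ofReal.continuousAt.comp (continuousAt_snd.mul
        (continuous_klFun.continuousAt.comp (continuousAt_fst.div continuousAt_snd hb.ne')))
    have heq : Function.uncurry klPerspective =ᶠ[𝓝 (a, b)]
        fun p => ENNReal.ofReal (p.2 * klFun (p.1 / p.2)) :=
      (continuousAt_const.eventually_lt continuousAt_snd hb).mono fun p hp =>
        klPerspective_of_pos hp
    rw [heq.eq_of_nhds] at hy
    filter_upwards [heq, hcont.eventually (lt_mem_nhds hy)] with p hp hyp
    rwa [hp]
  rcases lt_or_ge 0 a with ha | ha
  swap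
  · simp [Function.uncurry, klPerspective, hb.not_gt, ha.not_gt] at hy
  have hy_top : y ≠ ∞ := hy.ne_top
  have hpos :
      ∀ᶠ p : ℝ × ℝ in 𝓝 (a, b), 0 < p.2 → y.toReal < p.2 * klFun (p.1 / p.2) := by
    rcases hb.lt_or_eq with hb | rfl
    · exact (continuousAt_snd.eventually_lt continuousAt_const hb).mono
        fun p hp h => absurd h hp.not_gt
    · exact eventually_nhdsWithin_iff.1
        ((tendsto_mul_klFun_div_nhdsWithin ha).eventually_gt_atTop y.toReal)
  filter_upwards [hpos, continuousAt_const.eventually_lt continuousAt_fst ha] with p hp hp1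
  rcases lt_or_ge 0 p.2 with hp2 | hp2
  · rw [Function.uncurry_apply_pair, klPerspective_of_pos hp2]
    exact (ENNReal.lt_ofReal_iff_toReal_lt hy_top).2 (hp hp2)
  · simpa [Function.uncurry, klPerspective, hp2.not_gt, hp1] using hy_top.lt_top

section FiniteSpace

variable {E : Type*} [Fintype E] [MeasurableSpace E] [MeasurableSingletonClass E]

lemma klFin_eq_klDiv (μ ν : Measure E) [IsProbabilityMeasure μ] [IsProbabilityMeasure ν] :
    klFin μ ν = klDiv μ ν := by
  by_cases hac : ∀ x, ν {x} = 0 → μ {x} = 0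
  · have hμν := Measure.absolutelyContinuous_iff_forall_singleton.2 hac
    rw [klFin, if_pos hac, klDiv_of_ac_of_integrable hμν .of_finite,
      integral_fintype .of_finite, probReal_univ, probReal_univ, add_sub_cancel_right]
    congr 1
    refine Finset.sum_congr rfl fun x _ => ?_
    by_cases hx : μ {x} = 0
    · simp [measureReal_def, hx]
    rw [smul_eq_mul, llr,
      Measure.rnDeriv_eq_div_of_measure_singleton_ne_zero hμν (mt (hac x) hx),
      ENNReal.toReal_div, measureReal_def]
  · rw [klFin, if_neg hac,
      klDiv_of_not_ac (mt Measure.absolutelyContinuous_iff_forall_singleton.1 hac)]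

lemma klFin_map_le {E' : Type*} [Fintype E'] [MeasurableSpace E'] [MeasurableSingletonClass E']
    (μ ν : Measure E) [IsProbabilityMeasure μ] [IsProbabilityMeasure ν] (g : E → E') :
    klFin (μ.map g) (ν.map g) ≤ klFin μ ν := by
  have hg : Measurable g := measurable_of_finite g
  have := Measure.isProbabilityMeasure_map (μ := μ) hg.aemeasurable
  have := Measure.isProbabilityMeasure_map (μ := ν) hg.aemeasurable
  rw [klFin_eq_klDiv, klFin_eq_klDiv]
  exact klDiv_map_le μ ν hg

lemma klFin_eq_sum_klPerspective (μ ν : Measure E) [IsProbabilityMeasure μ]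
    [IsProbabilityMeasure ν] :
    klFin μ ν = ∑ x, klPerspective (μ.real {x}) (ν.real {x}) := by
  by_cases hac : ∀ x, ν {x} = 0 → μ {x} = 0
  · have hac' : ∀ x, ν.real {x} = 0 → μ.real {x} = 0 := fun x hx => by
      rw [measureReal_eq_zero_iff] at hx ⊢
      exact hac x hx
    rw [klFin, if_pos hac, Finset.sum_congr rfl fun x _ =>
        klPerspective_eq_ofReal measureReal_nonneg (hac' x),
      ← ENNReal.ofReal_sum_of_nonneg fun x _ =>
        mul_log_div_add_sub_nonneg measureReal_nonneg measureReal_nonneg (hac' x),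
      Finset.sum_sub_distrib, Finset.sum_add_distrib, sum_measureReal_singleton,
      sum_measureReal_singleton, Finset.coe_univ, probReal_univ, probReal_univ,
      add_sub_cancel_right]
    rfl
  · rw [klFin, if_neg hac, eq_comm, ENNReal.sum_eq_top]
    push Not at hac
    obtain ⟨x, hνx, hμx⟩ := hac
    have hμx' : 0 < μ.real {x} := ENNReal.toReal_pos hμx (measure_ne_top μ _)
    refine ⟨x, Finset.mem_univ x, ?_⟩
    simp only [klPerspective, measureReal_def, hνx, ENNReal.toReal_zero, lt_irrefl, if_false]
    exact if_pos hμx'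

lemma klFin_le_of_tendsto {ι : Type*} {l : Filter ι} [l.NeBot] {μ ν : Measure E}
    [IsProbabilityMeasure μ] [IsProbabilityMeasure ν] {μs νs : ι → Measure E}
    [∀ i, IsProbabilityMeasure (μs i)] [∀ i, IsProbabilityMeasure (νs i)]
    (hμ : ∀ x, Tendsto (fun i => (μs i).real {x}) l (𝓝 (μ.real {x})))
    (hν : ∀ x, Tendsto (fun i => (νs i).real {x}) l (𝓝 (ν.real {x})))
    {L : ℝ≥0∞} (hL : ∀ i, klFin (μs i) (νs i) ≤ L) :
    klFin μ ν ≤ L := by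
  have hlsc : LowerSemicontinuous
      fun p : (E → ℝ) × (E → ℝ) => ∑ x, klPerspective (p.1 x) (p.2 x) :=
    lowerSemicontinuous_sum fun x _ => lowerSemicontinuous_klPerspective.comp
      (by fun_prop : Continuous fun p : (E → ℝ) × (E → ℝ) => (p.1 x, p.2 x))
  have htend := (tendsto_pi_nhds.2 hμ).prodMk_nhds (tendsto_pi_nhds.2 hν)
  simp_rw [klFin_eq_sum_klPerspective] at hL ⊢
  by_contra! hlt
  obtain ⟨i, hi⟩ := (htend.eventually (hlsc _ L hlt)).exists
  exact (hL i).not_gt hi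

end FiniteSpace

section Approximation

open scoped symmDiff

variable {α : Type*} {mα : MeasurableSpace α}

lemma isSetAlgebra_iUnion_measurableSet {ι : Type*} [Nonempty ι] {m : ι → MeasurableSpace α}
    (hm : Directed (· ≤ ·) m) : IsSetAlgebra (⋃ i, {s | MeasurableSet[m i] s}) where
  empty_mem := Set.mem_iUnion.2 ⟨Classical.arbitrary ι, @MeasurableSet.empty _ (m _)⟩
  compl_mem := by
    simp only [Set.mem_iUnion, Set.mem_ofPred_eq]
    rintro s ⟨i, hs⟩
    exact ⟨i, hs.compl⟩
  union_mem := by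
    simp only [Set.mem_iUnion, Set.mem_ofPred_eq]
    rintro s t ⟨i, hs⟩ ⟨j, ht⟩
    obtain ⟨k, hik, hjk⟩ := hm i j
    exact ⟨k, (hik _ hs).union (hjk _ ht)⟩

lemma eventually_exists_measure_symmDiff_lt {m : ℕ → MeasurableSpace α} (hm : Monotone m)
    (hgen : ⨆ c, m c = mα) (ρ : Measure α) [IsFiniteMeasure ρ]
    {s : Set α} (hs : MeasurableSet s)
    {ε : ℝ≥0∞} (hε : 0 < ε) :
    ∀ᶠ c in atTop, ∃ t, MeasurableSet[m c] t ∧ ρ (t ∆ s) < ε := by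
  obtain ⟨t, ht, hts⟩ := exists_measure_symmDiff_lt_of_generateFrom_isSetRing (μ := ρ)
    (isSetAlgebra_iUnion_measurableSet hm.directed_le).isSetRing
    ⟨{Set.univ}, Set.countable_singleton _,
      Set.singleton_subset_iff.2 (Set.mem_iUnion.2 ⟨0, @MeasurableSet.univ _ (m 0)⟩), by simp⟩
    (by rw [MeasurableSpace.generateFrom_iUnion_measurableSet m, hgen]) hs hε
  obtain ⟨c, hc⟩ := Set.mem_iUnion.1 ht
  exact eventually_atTop.2 ⟨c, fun d hd => ⟨t, hm hd _ hc, hts⟩⟩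

variable {F : ℕ → Type*} [∀ c, MeasurableSpace (F c)] {f : ∀ c, α → F c}

lemma monotone_comap_of_exists_comp [∀ c, Countable (F c)]
    [∀ c, MeasurableSingletonClass (F c)]
    (hnest : ∀ c, ∃ g : F (c + 1) → F c, f c = g ∘ f (c + 1)) :
    Monotone fun c => MeasurableSpace.comap (f c) inferInstance :=
  monotone_nat_of_le_succ fun c => by
    obtain ⟨g, hg⟩ := hnest c
    rw [hg, ← MeasurableSpace.comap_comp]
    exact MeasurableSpace.comap_mono (measurable_of_countable g).comap_le

lemma eventually_exists_measure_comp_ne_le [∀ c, Countable (F c)]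
    [∀ c, MeasurableSingletonClass (F c)]
    (hnest : ∀ c, ∃ g : F (c + 1) → F c, f c = g ∘ f (c + 1))
    (hgen : ⨆ c, MeasurableSpace.comap (f c) inferInstance = mα)
    (ρ : Measure α) [IsFiniteMeasure ρ]
    {β : Type*} [Fintype β] [Nonempty β] [MeasurableSpace β] [MeasurableSingletonClass β]
    {g : α → β} (hg : Measurable g) {ε : ℝ≥0∞} (hε : 0 < ε) :
    ∀ᶠ c in atTop, ∃ k : F c → β, ρ {x | k (f c x) ≠ g x} ≤ ε := by
  have hε' : 0 < ε / Fintype.card β := ENNReal.div_pos hε.ne' (ENNReal.natCast_ne_top _)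
  filter_upwards [eventually_all.2 fun b : β => eventually_exists_measure_symmDiff_lt
    (monotone_comap_of_exists_comp hnest) hgen ρ (hg (measurableSet_singleton b)) hε'] with c hc
  choose t ht hρt using hc
  choose u _ hu using fun b => MeasurableSpace.measurableSet_comap.1 (ht b)
  refine ⟨fun y => if h : ∃ b, y ∈ u b then h.choose else Classical.arbitrary β, ?_⟩
  calc ρ {x | _ ≠ g x} ≤ ρ (⋃ b, t b ∆ (g ⁻¹' {b})) := measure_mono fun x hx => ?_
    _ ≤ ∑ b, ρ (t b ∆ (g ⁻¹' {b})) := measure_iUnion_fintype_le _ _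
    _ ≤ ∑ _b : β, ε / Fintype.card β := Finset.sum_le_sum fun b _ => (hρt b).le
    _ = ε := by
      rw [Finset.sum_const, Finset.card_univ, nsmul_eq_mul]
      exact ENNReal.mul_div_cancel (by simp) (ENNReal.natCast_ne_top _)
  by_contra hx'
  have hmem : ∀ b, x ∈ t b ↔ g x = b := fun b => by
    have hb : x ∉ t b ∆ (g ⁻¹' {b}) := fun h => hx' (Set.mem_iUnion.2 ⟨b, h⟩)
    simp only [Set.mem_symmDiff, Set.mem_preimage, Set.mem_singleton_iff, not_or, not_and,
      not_not] at hb
    exact ⟨hb.1, hb.2⟩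
  have hex : ∃ b, f c x ∈ u b := ⟨g x, by rw [← Set.mem_preimage, hu, hmem]⟩
  refine hx ?_
  simp only [dif_pos hex]
  exact ((hmem _).1 (by rw [← hu]; exact hex.choose_spec)).symm

lemma exists_tendsto_measure_comp_ne [∀ c, Finite (F c)] [∀ c, MeasurableSingletonClass (F c)]
    (hnest : ∀ c, ∃ g : F (c + 1) → F c, f c = g ∘ f (c + 1))
    (hgen : ⨆ c, MeasurableSpace.comap (f c) inferInstance = mα)
    (ρ : Measure α) [IsFiniteMeasure ρ]
    {β : Type*} [Fintype β] [Nonempty β] [MeasurableSpace β] [MeasurableSingletonClass β]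
    {g : α → β} (hg : Measurable g) :
    ∃ k : ∀ c, F c → β, Tendsto (fun c => ρ {x | k c (f c x) ≠ g x}) atTop (𝓝 0) := by
  choose k hk using fun c =>
    exists_eq_ciInf_of_finite (f := fun k : F c → β => ρ {x | k (f c x) ≠ g x})
  refine ⟨k, ENNReal.tendsto_nhds_zero.2 fun ε hε => ?_⟩
  filter_upwards [eventually_exists_measure_comp_ne_le hnest hgen ρ hg hε] with c ⟨k', hk'⟩
  exact (hk c).trans_le ((ciInf_le (OrderBot.bddBelow _) k').trans hk')

lemma tendsto_measureReal_map_of_tendsto_measure_ne {ι β : Type*} [MeasurableSpace β]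
    {l : Filter ι} {ρ : Measure α} [IsFiniteMeasure ρ] {h : ι → α → β} {g : α → β}
    (hh : ∀ i, Measurable (h i)) (hg : Measurable g)
    (hconv : Tendsto (fun i => ρ {x | h i x ≠ g x}) l (𝓝 0))
    {s : Set β} (hs : MeasurableSet s) :
    Tendsto (fun i => (ρ.map (h i)).real s) l (𝓝 ((ρ.map g).real s)) := by
  simp only [map_measureReal_apply (hh _) hs, map_measureReal_apply hg hs]
  rw [tendsto_iff_dist_tendsto_zero]
  refine squeeze_zero (fun _ => dist_nonneg) (fun i => ?_)
    (by simpa using (ENNReal.tendsto_toReal ENNReal.zero_ne_top).comp hconv)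
  refine (abs_measureReal_sub_le_measureReal_symmDiff (hh i hs).nullMeasurableSet
    (hg hs).nullMeasurableSet).trans (measureReal_mono fun x hx => ?_)
  rcases hx with ⟨hx, hx'⟩ | ⟨hx, hx'⟩ <;> exact fun heq => hx' (by simpa [heq] using hx)

end Approximation

lemma iSup_comap_eq_of_tendsto_ediam {G : Type*} [PseudoEMetricSpace G] [MeasurableSpace G]
    [BorelSpace G] {ι : Type*} [Countable ι] {l : Filter ι} [l.NeBot] {F : ι → Type*}
    [∀ i, MeasurableSpace (F i)] [∀ i, Countable (F i)] [∀ i, MeasurableSingletonClass (F i)]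
    {f : ∀ i, G → F i} (hf : ∀ i, Measurable (f i))
    (hdiam : ∀ x, Tendsto (fun i => Metric.ediam (f i ⁻¹' {f i x})) l (𝓝 0)) :
    ⨆ i, MeasurableSpace.comap (f i) inferInstance = ‹MeasurableSpace G› := by
  refine le_antisymm (iSup_le fun i => (hf i).comap_le) ?_
  refine (BorelSpace.measurable_eq (α := G)).trans_le
    (MeasurableSpace.generateFrom_le fun U hU => ?_)
  have hU : U = ⋃ (i) (y : F i) (_ : f i ⁻¹' {y} ⊆ U), f i ⁻¹' {y} := by
    refine Set.Subset.antisymm (fun x hx => ?_) (by simp)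
    obtain ⟨r, hr, hball⟩ := EMetric.isOpen_iff.1 hU x hx
    obtain ⟨i, hi⟩ := ((hdiam x).eventually (gt_mem_nhds hr)).exists
    refine Set.mem_iUnion₂.2 ⟨i, f i x, Set.mem_iUnion.2 ⟨fun z hz => hball ?_, rfl⟩⟩
    exact (Metric.edist_le_ediam_of_mem hz rfl).trans_lt hi
  rw [hU]
  exact MeasurableSet.iUnion fun i => MeasurableSet.iUnion fun y => MeasurableSet.iUnion fun _ =>
    le_iSup (fun i => MeasurableSpace.comap (f i) inferInstance) i _
      ⟨{y}, measurableSet_singleton y, rfl⟩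

section Entropy

variable {G : Type*} [MeasurableSpace G] (μ ν : Measure G) [IsProbabilityMeasure μ]
  [IsProbabilityMeasure ν]

lemma klFin_map_le_relEntropy {E : Type*} [Fintype E] [MeasurableSpace E]
    [MeasurableSingletonClass E] {h : G → E} (hh : Measurable h) :
    klFin (μ.map h) (ν.map h) ≤ relEntropy μ ν := by
  let e := Fintype.equivFin E
  have he : Measurable (e ∘ h) := (measurable_of_finite e).comp hh
  have := Measure.isProbabilityMeasure_map (μ := μ) he.aemeasurable
  have := Measure.isProbabilityMeasure_map (μ := ν) he.aemeasurable
  have hmap : ∀ ρ : Measure G, ρ.map h = (ρ.map (e ∘ h)).map e.symm := fun ρ => by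
    rw [Measure.map_map (measurable_of_finite _) he, ← Function.comp_assoc,
      Equiv.symm_comp_self, Function.id_comp]
  rw [hmap μ, hmap ν]
  exact (klFin_map_le _ _ _).trans
    (le_iSup₂_of_le (Fintype.card E) (e ∘ h) (le_iSup_of_le he le_rfl))

lemma klFin_map_le_of_tendsto_measure_ne {β : Type*} [Fintype β] [MeasurableSpace β]
    [MeasurableSingletonClass β] {ι : Type*} {l : Filter ι} [l.NeBot]
    {h : ι → G → β} {g : G → β}
    (hh : ∀ i, Measurable (h i)) (hg : Measurable g)
    (hconv : Tendsto (fun i => (μ + ν) {x | h i x ≠ g x}) l (𝓝 0))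
    {L : ℝ≥0∞} (hL : ∀ i, klFin (μ.map (h i)) (ν.map (h i)) ≤ L) :
    klFin (μ.map g) (ν.map g) ≤ L := by
  have := Measure.isProbabilityMeasure_map (μ := μ) hg.aemeasurable
  have := Measure.isProbabilityMeasure_map (μ := ν) hg.aemeasurable
  have := fun i => Measure.isProbabilityMeasure_map (μ := μ) (hh i).aemeasurable
  have := fun i => Measure.isProbabilityMeasure_map (μ := ν) (hh i).aemeasurable
  have hconv_le :
      ∀ ρ : Measure G, ρ ≤ μ + ν → Tendsto (fun i => ρ {x | h i x ≠ g x}) l (𝓝 0) :=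
    fun ρ hρ => tendsto_of_tendsto_of_tendsto_of_le_of_le tendsto_const_nhds hconv
      (fun _ => zero_le) fun i => hρ _
  exact klFin_le_of_tendsto
    (fun x => tendsto_measureReal_map_of_tendsto_measure_ne hh hg
      (hconv_le μ (Measure.le_add_right le_rfl)) (measurableSet_singleton x))
    (fun x => tendsto_measureReal_map_of_tendsto_measure_ne hh hg
      (hconv_le ν (Measure.le_add_left le_rfl)) (measurableSet_singleton x)) hL

variable {F : ℕ → Type*} [∀ c, Fintype (F c)] [∀ c, MeasurableSpace (F c)]
  [∀ c, MeasurableSingletonClass (F c)] {f : ∀ c, G → F c}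

lemma monotone_klFin_map (hf : ∀ c, Measurable (f c))
    (hnest : ∀ c, ∃ g : F (c + 1) → F c, f c = g ∘ f (c + 1)) :
    Monotone fun c => klFin (μ.map (f c)) (ν.map (f c)) := by
  refine monotone_nat_of_le_succ fun c => ?_
  obtain ⟨g, hg⟩ := hnest c
  have := Measure.isProbabilityMeasure_map (μ := μ) (hf (c + 1)).aemeasurable
  have := Measure.isProbabilityMeasure_map (μ := ν) (hf (c + 1)).aemeasurable
  simp only [hg, ← Measure.map_map (measurable_of_finite g) (hf (c + 1))]
  exact klFin_map_le _ _ g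

lemma relEntropy_le_iSup_klFin_map (hf : ∀ c, Measurable (f c))
    (hnest : ∀ c, ∃ g : F (c + 1) → F c, f c = g ∘ f (c + 1))
    (hgen : ⨆ c, MeasurableSpace.comap (f c) inferInstance = ‹MeasurableSpace G›) :
    relEntropy μ ν ≤ ⨆ c, klFin (μ.map (f c)) (ν.map (f c)) := by
  refine iSup₂_le fun n g => iSup_le fun hg => ?_
  have : Nonempty (Fin n) := ⟨g (nonempty_of_isProbabilityMeasure μ).some⟩
  obtain ⟨k, hk⟩ := exists_tendsto_measure_comp_ne hnest hgen (μ + ν) hg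
  refine klFin_map_le_of_tendsto_measure_ne μ ν (h := fun c => k c ∘ f c)
    (fun c => (measurable_of_finite (k c)).comp (hf c)) hg hk fun c => ?_
  have := Measure.isProbabilityMeasure_map (μ := μ) (hf c).aemeasurable
  have := Measure.isProbabilityMeasure_map (μ := ν) (hf c).aemeasurable
  rw [← Measure.map_map (measurable_of_finite (k c)) (hf c),
    ← Measure.map_map (measurable_of_finite (k c)) (hf c)]
  exact (klFin_map_le _ _ (k c)).trans
    (le_iSup (fun c => klFin (μ.map (f c)) (ν.map (f c))) c)

end Entropy

theorem coarseGrained_relEntropy_tendsto_general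
    {G : Type*} [MetricSpace G]
    [MeasurableSpace G] [BorelSpace G]
    (F : ℕ → Type) [∀ c, Fintype (F c)] [∀ c, MeasurableSpace (F c)]
    [∀ c, MeasurableSingletonClass (F c)]
    (f : ∀ c, G → F c) (hf : ∀ c, Measurable (f c))
    -- the partitions are nested
    (hnest : ∀ c, ∃ g : F (c + 1) → F c, f c = g ∘ f (c + 1))
    -- the cell containing any fixed point has diameter tending to 0
    (hdiam : ∀ x : G,
      Tendsto (fun c => EMetric.diam ((f c) ⁻¹' {f c x})) atTop (nhds 0))
    (μ ν : Measure G) [IsProbabilityMeasure μ] [IsProbabilityMeasure ν] :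
    Monotone (fun c => klFin (μ.map (f c)) (ν.map (f c))) ∧
      Tendsto (fun c => klFin (μ.map (f c)) (ν.map (f c))) atTop
        (nhds (relEntropy μ ν)) := by
  have hmono := monotone_klFin_map μ ν hf hnest
  refine ⟨hmono, ?_⟩
  convert tendsto_atTop_iSup hmono
  exact le_antisymm
    (relEntropy_le_iSup_klFin_map μ ν hf hnest (iSup_comap_eq_of_tendsto_ediam hf hdiam))
    (iSup_le fun c => klFin_map_le_relEntropy μ ν (hf c))

/-- **Monotone convergence of coarse-grained relative entropy (Deuschel–Stroock)**:
for nested finite measurable partitions of a Polish space whose cells shrink to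
points, the coarse-grained relative entropies increase to `h(μ | ν)`. -/
theorem coarseGrained_relEntropy_tendsto
    {G : Type*} [MetricSpace G] [TopologicalSpace.SeparableSpace G] [CompleteSpace G]
    [MeasurableSpace G] [BorelSpace G]
    (F : ℕ → Type) [∀ c, Fintype (F c)] [∀ c, MeasurableSpace (F c)]
    [∀ c, MeasurableSingletonClass (F c)]
    (f : ∀ c, G → F c) (hf : ∀ c, Measurable (f c))
    -- the partitions are nested
    (hnest : ∀ c, ∃ g : F (c + 1) → F c, f c = g ∘ f (c + 1))
    -- the cell containing any fixed point has diameter tending to 0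
    (hdiam : ∀ x : G,
      Tendsto (fun c => EMetric.diam ((f c) ⁻¹' {f c x})) atTop (nhds 0))
    (μ ν : Measure G) [IsProbabilityMeasure μ] [IsProbabilityMeasure ν] :
    Monotone (fun c => klFin (μ.map (f c)) (ν.map (f c))) ∧
      Tendsto (fun c => klFin (μ.map (f c)) (ν.map (f c))) atTop
        (nhds (relEntropy μ ν)) :=
  coarseGrained_relEntropy_tendsto_general F f hf hnest hdiam μ ν

end
end

section
/- Overlap bound for distinct-type blocks: fix M' ∈ ℕ and ε₃ ∈ (0,1), and for r = 1,...,R let W_{r,M'} be the set of sentences ζ ∈ Ẽ^{M'} in which sentences of type r start at more than (1−ε₃/2)M' of the positions (frequency of V_r-patterns exceeds 1−ε₃/2), where the pattern sets V_r, r=1,...,R, are pairwise disjoint. Then for r ≠ r', any ζ ∈ W_{r,M'} and η ∈ W_{r',M'} satisfy: the longest k such that the k-suffix of ζ equals the k-prefix of η is at most ε₃ M'. -/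
/-!
Patterns of `ζ` starting in its last `k` positions are patterns of `η` starting in its first `k`
positions, because that stretch of `ζ` is a prefix of `η` and patterns have the fixed length
`Mt`. So among the first `k` positions of `η`, more than `k - ε₃M'/2` carry a type-`r` pattern
and more than `k - ε₃M'/2` carry a type-`r'` pattern; by disjointness of the types these two
sets of positions are disjoint, whence `2(k - ε₃M'/2) < k`.
-/

open scoped Classical

noncomputable section

/-- The number of positions `i < M'` of the sentence `ζ` at which a subsentence
belonging to `V` starts (the subsentence of length `M̃` beginning at `i`). -/
def startCount {W : Type*} (Mt : ℕ) (V : Set (List W)) (ζ : List W) : ℕ :=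
  ((Finset.range ζ.length).filter fun i => (ζ.drop i).take Mt ∈ V).card

open Finset

section StartSet

variable {W : Type*} (Mt : ℕ) (V : Set (List W))

def startSet (l : List W) : Finset ℕ :=
  (range l.length).filter fun i => (l.drop i).take Mt ∈ V

theorem startCount_eq_card_startSet (l : List W) :
    startCount Mt V l = #(startSet Mt V l) := rfl

theorem startSet_subset_range (l : List W) : startSet Mt V l ⊆ range l.length :=
  filter_subset _ _

theorem disjoint_startSet {V' : Set (List W)} (h : Disjoint V V') (l : List W) :
    Disjoint (startSet Mt V l) (startSet Mt V' l) :=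
  disjoint_filter.2 fun _ _ hV hV' => Set.disjoint_left.1 h hV hV'

variable {Mt V}

theorem startSet_subset_of_isPrefix (hV : ∀ z ∈ V, z.length = Mt) {l₁ l₂ : List W}
    (h : l₁ <+: l₂) : startSet Mt V l₁ ⊆ startSet Mt V l₂ := by
  intro i hi
  simp only [startSet, mem_filter, mem_range] at hi ⊢
  obtain ⟨hi, hmem⟩ := hi
  have hpre : (l₁.drop i).take Mt <+: (l₂.drop i).take Mt := (h.drop i).take Mt
  have heq : (l₁.drop i).take Mt = (l₂.drop i).take Mt :=
    hpre.eq_of_length_le (by rw [hV _ hmem]; exact List.length_take_le _ _)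
  exact ⟨hi.trans_le h.length_le, heq ▸ hmem⟩

theorem startCount_append_le (l₁ l₂ : List W) :
    startCount Mt V (l₁ ++ l₂) ≤ l₁.length + startCount Mt V l₂ := by
  have hsub : startSet Mt V (l₁ ++ l₂) ⊆
      range l₁.length ∪ (startSet Mt V l₂).image (· + l₁.length) := by
    intro i hi
    simp only [startSet, mem_filter, mem_range, List.length_append] at hi
    rcases lt_or_ge i l₁.length with hlt | hge
    · exact mem_union_left _ (mem_range.2 hlt)
    · refine mem_union_right _ (mem_image.2 ⟨i - l₁.length, ?_, by omega⟩)
      have hdrop : (l₁ ++ l₂).drop i = l₂.drop (i - l₁.length) := by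
        rw [List.drop_append, List.drop_eq_nil_of_le hge, List.nil_append]
      simp only [startSet, mem_filter, mem_range]
      exact ⟨by omega, hdrop ▸ hi.2⟩
  calc startCount Mt V (l₁ ++ l₂)
      ≤ #(range l₁.length ∪ (startSet Mt V l₂).image (· + l₁.length)) := card_le_card hsub
    _ ≤ l₁.length + startCount Mt V l₂ :=
      (card_union_le _ _).trans (by rw [card_range]; exact Nat.add_le_add_left card_image_le _)

theorem startCount_le_card_filter_lt_add (l : List W) (k : ℕ) :
    startCount Mt V l ≤ #((startSet Mt V l).filter (· < k)) + (l.length - k) := by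
  have hlate : (startSet Mt V l).filter (fun i => ¬ i < k) ⊆ Ico k l.length := fun i hi => by
    simp only [mem_filter] at hi
    exact mem_Ico.2 ⟨not_lt.1 hi.2, mem_range.1 (startSet_subset_range Mt V l hi.1)⟩
  rw [startCount_eq_card_startSet, ← card_filter_add_card_filter_not (· < k)]
  exact Nat.add_le_add_left ((card_le_card hlate).trans_eq (Nat.card_Ico _ _)) _

theorem startCount_take_add_card_filter_lt_le (hV : ∀ z ∈ V, z.length = Mt)
    {V' : Set (List W)} (hVV' : Disjoint V V') (l : List W) {k : ℕ} (hk : k ≤ l.length) :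
    startCount Mt V (l.take k) + #((startSet Mt V' l).filter (· < k)) ≤ k := by
  have hP : startSet Mt V (l.take k) ⊆ range k := by
    simpa [List.length_take, min_eq_left hk] using startSet_subset_range Mt V (l.take k)
  have hQ : (startSet Mt V' l).filter (· < k) ⊆ range k := fun i hi =>
    mem_range.2 (mem_filter.1 hi).2
  have hdisj : Disjoint (startSet Mt V (l.take k)) ((startSet Mt V' l).filter (· < k)) :=
    (disjoint_startSet Mt V hVV' l).mono (startSet_subset_of_isPrefix hV (List.take_prefix k l))
      (filter_subset _ _)
  rw [startCount_eq_card_startSet, ← card_union_of_disjoint hdisj]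
  exact (card_le_card (union_subset hP hQ)).trans_eq (card_range k)

end StartSet

theorem overlap_bound_general
    {W : Type*} (R : ℕ) (Mt M' : ℕ)
    (V : Fin R → Set (List W))
    (hlen : ∀ r, ∀ z ∈ V r, z.length = Mt)
    (hdisj : ∀ r r', r ≠ r' → Disjoint (V r) (V r'))
    (ε₃ : ℝ)
    (r r' : Fin R) (hrr' : r ≠ r')
    (ζ η : List W) (hζlen : ζ.length = M') (hηlen : η.length = M')
    (hζ : (1 - ε₃ / 2) * M' < (startCount Mt (V r) ζ : ℝ))
    (hη : (1 - ε₃ / 2) * M' < (startCount Mt (V r') η : ℝ))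
    (k : ℕ) (hk : k ≤ M')
    (hoverlap : ζ.drop (M' - k) = η.take k) :
    (k : ℝ) ≤ ε₃ * M' := by
  have hζsplit : ζ = ζ.take (M' - k) ++ η.take k := by rw [← hoverlap, List.take_append_drop]
  have hζcount : startCount Mt (V r) ζ ≤ (M' - k) + startCount Mt (V r) (η.take k) := by
    have := startCount_append_le (Mt := Mt) (V := V r) (ζ.take (M' - k)) (η.take k)
    rwa [← hζsplit, List.length_take, hζlen, min_eq_left (Nat.sub_le _ _)] at this
  have hshared := startCount_take_add_card_filter_lt_le (hlen r) (hdisj r r' hrr') η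
    (hk.trans_eq hηlen.symm)
  have hηcount := startCount_le_card_filter_lt_add (Mt := Mt) (V := V r') η k
  have hsum : startCount Mt (V r) ζ + startCount Mt (V r') η + k ≤ 2 * M' := by
    rw [hηlen] at hηcount; omega
  have hsumR : (startCount Mt (V r) ζ : ℝ) + startCount Mt (V r') η + k ≤ 2 * M' := by
    exact_mod_cast hsum
  linarith

/-- **Overlap bound for blocks of distinct type**: if the pattern sets
`V r` are pairwise disjoint sets of sentences of length `M̃`, and `ζ, η` are
sentences of length `M'` in which patterns of types `r ≠ r'` respectively start at
more than `(1-ε₃/2)M'` positions, then the longest `k` such that the `k`-suffix of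
`ζ` equals the `k`-prefix of `η` satisfies `k ≤ ε₃ M'`. -/
theorem overlap_bound
    {W : Type*} (R : ℕ) (Mt M' : ℕ) (hM : Mt ≤ M')
    (V : Fin R → Set (List W))
    (hlen : ∀ r, ∀ z ∈ V r, z.length = Mt)
    (hdisj : ∀ r r', r ≠ r' → Disjoint (V r) (V r'))
    (ε₃ : ℝ) (hε₃ : ε₃ ∈ Set.Ioo (0 : ℝ) 1)
    (r r' : Fin R) (hrr' : r ≠ r')
    (ζ η : List W) (hζlen : ζ.length = M') (hηlen : η.length = M')
    (hζ : (1 - ε₃ / 2) * M' < (startCount Mt (V r) ζ : ℝ))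
    (hη : (1 - ε₃ / 2) * M' < (startCount Mt (V r') η : ℝ))
    (k : ℕ) (hk : k ≤ M')
    (hoverlap : ζ.drop (M' - k) = η.take k) :
    (k : ℝ) ≤ ε₃ * M' :=
  overlap_bound_general R Mt M' V hlen hdisj ε₃ r r' hrr' ζ η hζlen hηlen hζ hη k hk hoverlap
end
end
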